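/- arXiv:1303.7248 — 4 statements merged into one kernel-verified Lean document; each statement's English description precedes it below -/
import Mathlib

section
/- Let G be a finite connected undirected graph and suppose each f_ij is continuous, odd, 2π-periodic, with f_ij(θ) > 0 for all θ ∈ (0,π). If φ* is an equilibrium of φ̇_i = Σ_{j∈N_i} f_ij(φ*_j − φ*_i) whose phases all lie in a closed half-circle (d(φ*, V(G)) ≤ π), then either all phases are equal (φ* = λ·1_N for some λ), or there exists a cut C of G such that φ*_j − φ*_i = π (mod 2π) for every edge ij ∈ C. -/
open Finset Real

/-!
Let `i` be a vertex where `φ` is maximal. Since all phases lie in `[c, c + π]`, every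
difference `φ j - φ i` lies in `[-π, 0]`, where an odd, `2π`-periodic coupling positive on
`(0, π)` is nonpositive and vanishes only at `-π` and `0`. The equilibrium equation at `i` is a
sum of such nonpositive terms, so each vanishes: every neighbour of a maximal vertex is either
maximal too or exactly `π` behind. Hence, unless `φ` is constant, the set of maximal vertices
is the required cut.
-/

namespace Function.Odd

variable {g : ℝ → ℝ}

lemma map_neg_of_periodic_two_mul (hodd : g.Odd) {a : ℝ} (hper : g.Periodic (2 * a)) :
    g (-a) = 0 := by
  have h : g a = g (-a) := by simpa [two_mul] using hper (-a)
  linarith [hodd a]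

lemma neg_of_mem_Ioo (hodd : g.Odd) (hpos : ∀ θ, 0 < θ → θ < π → 0 < g θ)
    {θ : ℝ} (h₁ : -π < θ) (h₂ : θ < 0) : g θ < 0 := by
  have := hpos (-θ) (by linarith) (by linarith)
  linarith [hodd (-θ), neg_neg θ ▸ hodd (-θ)]

lemma nonpos_of_mem_Icc (hodd : g.Odd) (hper : g.Periodic (2 * π))
    (hpos : ∀ θ, 0 < θ → θ < π → 0 < g θ) {θ : ℝ} (h₁ : -π ≤ θ) (h₂ : θ ≤ 0) : g θ ≤ 0 := by
  rcases h₁.eq_or_lt with rfl | h₁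
  · exact (hodd.map_neg_of_periodic_two_mul hper).le
  rcases h₂.eq_or_lt with rfl | h₂
  · exact hodd.map_zero.le
  exact (hodd.neg_of_mem_Ioo hpos h₁ h₂).le

lemma eq_neg_pi_of_eq_zero (hodd : g.Odd) (hpos : ∀ θ, 0 < θ → θ < π → 0 < g θ)
    {θ : ℝ} (h₁ : -π ≤ θ) (h₂ : θ < 0) (h : g θ = 0) : θ = -π := by
  by_contra hne
  exact (hodd.neg_of_mem_Ioo hpos (lt_of_le_of_ne h₁ (Ne.symm hne)) h₂).ne h

end Function.Odd

lemma sub_eq_neg_pi_of_adj_of_forall_le {V : Type*} (G : SimpleGraph V) [Fintype V]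
    [DecidableRel G.Adj] (f : V → V → ℝ → ℝ)
    (hodd : ∀ i j, (f i j).Odd) (hper : ∀ i j, (f i j).Periodic (2 * π))
    (hpos : ∀ i j θ, 0 < θ → θ < π → 0 < f i j θ)
    (φ : V → ℝ) {i j : V} (hmax : ∀ k, φ k ≤ φ i) (hspread : ∀ k, φ i - π ≤ φ k)
    (heq : ∑ k ∈ G.neighborFinset i, f i k (φ k - φ i) = 0)
    (hadj : G.Adj i j) (hlt : φ j < φ i) : φ j - φ i = -π := by
  have hnonpos : ∀ k ∈ G.neighborFinset i, f i k (φ k - φ i) ≤ 0 := fun k _ =>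
    (hodd i k).nonpos_of_mem_Icc (hper i k) (hpos i k)
      (by linarith [hspread k]) (by linarith [hmax k])
  have hzero := (sum_eq_zero_iff_of_nonpos hnonpos).mp heq j
    ((G.mem_neighborFinset i j).mpr hadj)
  exact (hodd i j).eq_neg_pi_of_eq_zero (hpos i j)
    (by linarith [hspread j]) (by linarith) hzero

theorem stmt5_general {V : Type*} [Fintype V]
    (G : SimpleGraph V) [DecidableRel G.Adj]
    (f : V → V → ℝ → ℝ)
    (hodd : ∀ i j θ, f i j (-θ) = -(f i j θ))
    (hper : ∀ i j θ, f i j (θ + 2 * π) = f i j θ)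
    (hpos : ∀ i j θ, 0 < θ → θ < π → 0 < f i j θ)
    (φ : V → ℝ) (c : ℝ)
    (hhalf : ∀ i, φ i ∈ Set.Icc c (c + π))  -- d(φ*, V(G)) ≤ π
    (heq : ∀ i, ∑ j ∈ G.neighborFinset i, f i j (φ j - φ i) = 0) :
    (∃ l : ℝ, ∀ i, φ i = l) ∨
    (∃ S : Finset V, S.Nonempty ∧ S ≠ univ ∧
      ∀ i ∈ S, ∀ j ∉ S, G.Adj i j → ∃ m : ℤ, φ j - φ i = π + 2 * π * m) := by
  by_cases hconst : ∃ l : ℝ, ∀ i, φ i = l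
  · exact Or.inl hconst
  push Not at hconst
  obtain ⟨k₀, -⟩ := hconst 0
  have : Nonempty V := ⟨k₀⟩
  obtain ⟨i₀, hmax⟩ := Finite.exists_max φ
  obtain ⟨k, hk⟩ := hconst (φ i₀)
  refine Or.inr ⟨univ.filter (fun i => φ i = φ i₀), ⟨i₀, by simp⟩,
    fun h => hk (by simpa using h.ge (mem_univ k)), ?_⟩
  intro i hi j hj hadj
  simp only [mem_filter, mem_univ, true_and] at hi hj
  have hspread : ∀ k, φ i - π ≤ φ k := fun k => by linarith [(hhalf k).1, (hhalf i).2]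
  have hdiff := sub_eq_neg_pi_of_adj_of_forall_le G f hodd hper hpos φ (hi ▸ hmax) hspread (heq i)
    hadj (hi ▸ lt_of_le_of_ne (hmax j) hj)
  exact ⟨-1, by push_cast; linarith⟩

/-- On a finite connected graph with continuous, odd, 2π-periodic coupling
functions that are positive on `(0, π)`, any equilibrium whose phases all lie in a
closed half-circle (here: all representatives in `[c, c+π]`) is either in-phase, or
admits a cut all of whose crossing edges have phase difference `π (mod 2π)`. -/
theorem stmt5 {V : Type*} [Fintype V] [DecidableEq V]
    (G : SimpleGraph V) [DecidableRel G.Adj] (hG : G.Connected)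
    (f : V → V → ℝ → ℝ)
    (hsym : ∀ i j, f i j = f j i)
    (hodd : ∀ i j θ, f i j (-θ) = -(f i j θ))
    (hper : ∀ i j θ, f i j (θ + 2 * π) = f i j θ)
    (hcont : ∀ i j, Continuous (f i j))
    (hpos : ∀ i j θ, 0 < θ → θ < π → 0 < f i j θ)
    (φ : V → ℝ) (c : ℝ)
    (hhalf : ∀ i, φ i ∈ Set.Icc c (c + π))  -- d(φ*, V(G)) ≤ π
    (heq : ∀ i, ∑ j ∈ G.neighborFinset i, f i j (φ j - φ i) = 0) :
    (∃ l : ℝ, ∀ i, φ i = l) ∨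
    (∃ S : Finset V, S.Nonempty ∧ S ≠ univ ∧
      ∀ i ∈ S, ∀ j ∉ S, G.Adj i j → ∃ m : ℤ, φ j - φ i = π + 2 * π * m) :=
  stmt5_general G f hodd hper hpos φ c hhalf heq
end

section
/- Fix b ∈ (0, π) and let each f_ij belong to the family F_b: odd, 2π-periodic, C¹, with f'_ij(θ) > 0 for θ ∈ (−b, b) and f'_ij(θ) < 0 for θ ∈ (b, 2π−b). Let G be a connected graph on N vertices and let φ* be a non-in-phase equilibrium of φ̇_i = Σ_{j∈N_i} f_ij(φ_j − φ_i). If b ≤ π/(N−1), then there exists a cut C of G such that f'_ij(φ*_j − φ*_i) < 0 for every edge ij ∈ C (hence φ* is unstable). -/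
/-!
If every cut had an edge with `f'_ij(φ_j - φ_i) ≥ 0`, such an edge would join two phases at
circle distance at most `b`, and growing a vertex set one such edge at a time would produce lifts
`ψ_i ≡ φ_i (mod 2π)` with real spread at most `(N - 1) b ≤ π`. At a vertex `i` where `ψ` is
maximal, every term `f_ij(ψ_j - ψ_i)` of the equilibrium equation has its argument in `[-π, 0]`,
hence is nonpositive; so all of them vanish and every neighbour has `ψ_j = ψ_i` or
`ψ_j = ψ_i - π`. The set where `ψ` is maximal is therefore a cut (proper since `φ` is not in
phase) across which `φ_j - φ_i ≡ π`, where `f' < 0`: a contradiction.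
-/

open Finset Real Function AddCommGroup

theorem Function.Periodic.eq_of_modEq {g : ℝ → ℝ} {p a a' : ℝ} (hg : Periodic g p)
    (h : a ≡ a' [PMOD p]) : g a = g a' := by
  obtain ⟨z, rfl⟩ := modEq_iff_eq_add_zsmul.1 h
  exact (hg.zsmul z a).symm

theorem Function.Periodic.deriv {g : ℝ → ℝ} {p : ℝ} (hg : Periodic g p) :
    Periodic (deriv g) p :=
  fun x => by rw [← deriv_comp_add_const, funext hg]

/-- The family `F_b` of coupling functions. -/
structure IsCouplingFunction (b : ℝ) (g : ℝ → ℝ) : Prop where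
  odd : Function.Odd g
  periodic : Periodic g (2 * π)
  continuous : Continuous g
  deriv_pos : ∀ θ ∈ Set.Ioo (-b) b, 0 < deriv g θ
  deriv_neg : ∀ θ ∈ Set.Ioo b (2 * π - b), deriv g θ < 0

namespace IsCouplingFunction

variable {b : ℝ} {g : ℝ → ℝ}

theorem map_neg_pi (hg : IsCouplingFunction b g) : g (-π) = 0 := by
  have h := hg.periodic (-π)
  rw [show -π + 2 * π = π by ring, ← neg_neg π, hg.odd (-π), neg_neg] at h
  linarith

theorem pos_of_mem_Ioo (hg : IsCouplingFunction b g) {θ : ℝ} (hθ : θ ∈ Set.Ioo 0 π) :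
    0 < g θ := by
  obtain ⟨h0, hπ⟩ := hθ
  rcases le_or_gt θ b with hb | hb
  · have hmono : StrictMonoOn g (Set.Icc 0 θ) :=
      strictMonoOn_of_deriv_pos (convex_Icc 0 θ) hg.continuous.continuousOn fun x hx => by
        rw [interior_Icc] at hx
        exact hg.deriv_pos x ⟨by linarith [hx.1], by linarith [hx.2]⟩
    simpa [hg.odd.map_zero] using hmono ⟨le_rfl, h0.le⟩ ⟨h0.le, le_rfl⟩ h0
  · have hanti : StrictAntiOn g (Set.Icc θ π) :=
      strictAntiOn_of_deriv_neg (convex_Icc θ π) hg.continuous.continuousOn fun x hx => by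
        rw [interior_Icc] at hx
        exact hg.deriv_neg x ⟨by linarith [hx.1], by linarith [hx.2]⟩
    have h := hanti ⟨le_rfl, hπ.le⟩ ⟨hπ.le, le_rfl⟩ hπ
    rwa [← neg_neg π, hg.odd, hg.map_neg_pi, neg_zero] at h

theorem nonpos_of_mem_Icc (hg : IsCouplingFunction b g) {θ : ℝ} (hθ : θ ∈ Set.Icc (-π) 0) :
    g θ ≤ 0 := by
  rcases eq_or_lt_of_le hθ.1 with rfl | h1
  · exact hg.map_neg_pi.le
  rcases eq_or_lt_of_le hθ.2 with rfl | h2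
  · exact hg.odd.map_zero.le
  have := hg.pos_of_mem_Ioo (θ := -θ) ⟨by linarith, by linarith⟩
  rw [hg.odd] at this
  linarith

theorem eq_zero_or_eq_neg_pi_of_mem_Icc (hg : IsCouplingFunction b g) {θ : ℝ}
    (hθ : θ ∈ Set.Icc (-π) 0) (h : g θ = 0) : θ = 0 ∨ θ = -π := by
  by_contra! hne
  have := hg.pos_of_mem_Ioo (θ := -θ)
    ⟨by linarith [lt_of_le_of_ne hθ.2 hne.1], by linarith [lt_of_le_of_ne' hθ.1 hne.2]⟩
  rw [hg.odd, h] at this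
  linarith

theorem exists_abs_le_modEq_of_deriv_nonneg (hg : IsCouplingFunction b g) {θ : ℝ}
    (h : 0 ≤ deriv g θ) : ∃ δ, |δ| ≤ b ∧ θ ≡ δ [PMOD 2 * π] := by
  have h2π : 0 < 2 * π := by positivity
  set δ := toIcoMod h2π (-b) θ
  have hδ : δ ∈ Set.Ico (-b) (-b + 2 * π) := toIcoMod_mem_Ico h2π (-b) θ
  have hmod : θ ≡ δ [PMOD 2 * π] := (modEq_iff_eq_add_zsmul.2
    ⟨_, eq_add_of_sub_eq' (self_sub_toIcoMod h2π (-b) θ)⟩).symm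
  refine ⟨δ, abs_le.2 ⟨hδ.1, not_lt.1 fun hbδ => h.not_gt ?_⟩, hmod⟩
  rw [hg.periodic.deriv.eq_of_modEq hmod]
  exact hg.deriv_neg δ ⟨hbδ, by linarith [hδ.2]⟩

theorem deriv_neg_of_modEq_pi (hg : IsCouplingFunction b g) (hbπ : b < π) {θ : ℝ}
    (h : θ ≡ π [PMOD 2 * π]) : deriv g θ < 0 := by
  rw [hg.periodic.deriv.eq_of_modEq h]
  exact hg.deriv_neg π ⟨hbπ, by linarith [pi_pos]⟩

end IsCouplingFunction

theorem eq_or_eq_sub_pi_of_sum_eq_zero {ι : Type*} {s : Finset ι} {b x : ℝ}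
    {g : ι → ℝ → ℝ} {ψ : ι → ℝ} (hg : ∀ j ∈ s, IsCouplingFunction b (g j))
    (hle : ∀ j ∈ s, ψ j ≤ x) (hge : ∀ j ∈ s, x - π ≤ ψ j)
    (hsum : ∑ j ∈ s, g j (ψ j - x) = 0) {j : ι} (hj : j ∈ s) :
    ψ j = x ∨ ψ j = x - π := by
  have hmem : ∀ k ∈ s, ψ k - x ∈ Set.Icc (-π) 0 := fun k hk =>
    ⟨by linarith [hge k hk], by linarith [hle k hk]⟩
  have hzero := (sum_eq_zero_iff_of_nonpos fun k hk =>
    (hg k hk).nonpos_of_mem_Icc (hmem k hk)).1 hsum j hj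
  rcases (hg j hj).eq_zero_or_eq_neg_pi_of_mem_Icc (hmem j hj) hzero with h | h
  · exact .inl (by linarith)
  · exact .inr (by linarith)

theorem update_sub_le_succ_mul {V : Type*} [DecidableEq V] {ψ : V → ℝ} {S : Finset V}
    {i j : V} {b δ : ℝ} {n : ℕ} (hψ : ∀ k ∈ S, ∀ l ∈ S, ψ k - ψ l ≤ n * b) (hi : i ∈ S)
    (hj : j ∉ S) (hδ : |δ| ≤ b) :
    ∀ k ∈ insert j S, ∀ l ∈ insert j S,
      update ψ j (ψ i + δ) k - update ψ j (ψ i + δ) l ≤ (n + 1 : ℕ) * b := by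
  have hb : 0 ≤ b := (abs_nonneg δ).trans hδ
  obtain ⟨hδl, hδr⟩ := abs_le.1 hδ
  have hψS : ∀ k ∈ S, update ψ j (ψ i + δ) k = ψ k := fun k hk =>
    update_of_ne (ne_of_mem_of_not_mem hk hj) _ _
  intro k hk l hl
  rw [mem_insert] at hk hl
  rcases hk with rfl | hk <;> rcases hl with rfl | hl
  · simp only [sub_self]; positivity
  · have := hψ i hi l hl
    simp only [update_self, hψS l hl]; push_cast; linarith
  · have := hψ k hk i hi
    simp only [update_self, hψS k hk]; push_cast; linarith
  · have := hψ k hk l hl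
    simp only [hψS k hk, hψS l hl]; push_cast; linarith

theorem exists_lift_sub_le_of_forall_cut {V : Type*} [Fintype V] [DecidableEq V] {p b : ℝ}
    (φ : V → ℝ)
    (hcut : ∀ S : Finset V, S.Nonempty → S ≠ univ →
      ∃ i ∈ S, ∃ j ∉ S, ∃ δ, |δ| ≤ b ∧ φ j - φ i ≡ δ [PMOD p]) :
    ∃ ψ : V → ℝ, (∀ i, ψ i ≡ φ i [PMOD p]) ∧
      ∀ i j, ψ i - ψ j ≤ (Fintype.card V - 1 : ℕ) * b := by
  rcases isEmpty_or_nonempty V with hV | hV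
  · exact ⟨φ, fun _ => modEq_rfl, fun i => isEmptyElim i⟩
  have grow : ∀ n < Fintype.card V, ∃ S : Finset V, #S = n + 1 ∧ ∃ ψ : V → ℝ,
      (∀ i, ψ i ≡ φ i [PMOD p]) ∧ ∀ i ∈ S, ∀ j ∈ S, ψ i - ψ j ≤ n * b := by
    intro n
    induction n with
    | zero => exact fun _ => ⟨{Classical.arbitrary V}, rfl, φ, fun _ => modEq_rfl, by simp⟩
    | succ n ih =>
      intro hn
      obtain ⟨S, hcard, ψ, hψφ, hψ⟩ := ih (by omega)
      obtain ⟨i, hi, j, hj, δ, hδ, hij⟩ :=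
        hcut S (card_pos.1 (by omega)) fun h => by rw [h, card_univ] at hcard; omega
      refine ⟨insert j S, by rw [card_insert_of_notMem hj, hcard], update ψ j (ψ i + δ),
        fun k => ?_, update_sub_le_succ_mul hψ hi hj hδ⟩
      rcases eq_or_ne k j with rfl | hk
      · rw [update_self, ← add_sub_cancel (φ i) (φ k)]
        exact (hψφ i).add hij.symm
      · rw [update_of_ne hk]
        exact hψφ k
  obtain ⟨S, hS, ψ, hψφ, hψ⟩ := grow (Fintype.card V - 1) (by simp [Fintype.card_pos])
  have hSu : S = univ := eq_univ_of_card S (by have := Fintype.card_pos (α := V); omega)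
  exact ⟨ψ, hψφ, fun i j => hψ i (by simp [hSu]) j (by simp [hSu])⟩

theorem sub_modEq_pi_of_forall_le {V : Type*} [Fintype V] {G : SimpleGraph V}
    [DecidableRel G.Adj] {b : ℝ} {f : V → V → ℝ → ℝ} {φ ψ : V → ℝ} {i j : V}
    (hf : ∀ k, IsCouplingFunction b (f i k)) (hψφ : ∀ k, ψ k ≡ φ k [PMOD 2 * π])
    (heq : ∑ k ∈ G.neighborFinset i, f i k (φ k - φ i) = 0) (hle : ∀ k, ψ k ≤ ψ i)
    (hge : ∀ k, ψ i - π ≤ ψ k) (hadj : G.Adj i j) (hj : ψ j ≠ ψ i) :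
    φ j - φ i ≡ π [PMOD 2 * π] := by
  have hsum : ∑ k ∈ G.neighborFinset i, f i k (ψ k - ψ i) = 0 := by
    rw [← heq]
    exact sum_congr rfl fun k _ => (hf k).periodic.eq_of_modEq ((hψφ k).sub (hψφ i))
  have hψj : ψ j = ψ i - π :=
    (eq_or_eq_sub_pi_of_sum_eq_zero (fun k _ => hf k) (fun k _ => hle k) (fun k _ => hge k)
      hsum ((G.mem_neighborFinset i j).2 hadj)).resolve_left hj
  exact ((hψφ j).sub (hψφ i)).symm.trans (modEq_iff_eq_add_zsmul.2 ⟨1, by rw [hψj]; ring⟩)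

theorem exists_lt_of_not_inPhase {V : Type*} {φ ψ : V → ℝ}
    (hψφ : ∀ i, ψ i ≡ φ i [PMOD 2 * π]) (hnip : ¬ ∀ i j, ∃ m : ℤ, φ i - φ j = 2 * π * m) :
    ∃ i j, ψ i < ψ j := by
  by_contra! h
  refine hnip fun i j => ?_
  have hij : φ j ≡ φ i [PMOD 2 * π] :=
    (hψφ j).symm.trans (le_antisymm (h j i) (h i j) ▸ hψφ i)
  obtain ⟨z, hz⟩ := modEq_iff_eq_add_zsmul.1 hij
  exact ⟨z, by rw [hz, zsmul_eq_mul]; ring⟩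

theorem natCast_sub_one_mul_le {N : ℕ} {b c : ℝ} (hc : 0 ≤ c) (h : b ≤ c / (N - 1)) :
    ((N - 1 : ℕ) : ℝ) * b ≤ c := by
  rcases Nat.lt_or_ge 1 N with hN | hN
  · rwa [Nat.cast_sub hN.le, Nat.cast_one, ← le_div_iff₀' (by simpa using hN)]
  · simp [Nat.sub_eq_zero_of_le hN, hc]

theorem stmt6_general {N : ℕ}
    (G : SimpleGraph (Fin N)) [DecidableRel G.Adj]
    (b : ℝ) (hbπ : b < π)
    (f : Fin N → Fin N → ℝ → ℝ)
    (hodd : ∀ i j θ, f i j (-θ) = -(f i j θ))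
    (hper : ∀ i j θ, f i j (θ + 2 * π) = f i j θ)
    (hC1 : ∀ i j, ContDiff ℝ 1 (f i j))
    (hpos : ∀ i j θ, -b < θ → θ < b → 0 < deriv (f i j) θ)
    (hneg : ∀ i j θ, b < θ → θ < 2 * π - b → deriv (f i j) θ < 0)
    (hbN : b ≤ π / (N - 1))
    (φ : Fin N → ℝ)
    (heq : ∀ i, ∑ j ∈ G.neighborFinset i, f i j (φ j - φ i) = 0)
    (hnip : ¬ ∀ i j, ∃ m : ℤ, φ i - φ j = 2 * π * m) :  -- non-in-phase
    ∃ S : Finset (Fin N), S.Nonempty ∧ S ≠ univ ∧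
      ∀ i ∈ S, ∀ j ∉ S, G.Adj i j → deriv (f i j) (φ j - φ i) < 0 := by
  have hf i j : IsCouplingFunction b (f i j) := ⟨hodd i j, hper i j, (hC1 i j).continuous,
    fun θ hθ => hpos i j θ hθ.1 hθ.2, fun θ hθ => hneg i j θ hθ.1 hθ.2⟩
  by_contra! hcut
  obtain ⟨ψ, hψφ, hψ⟩ := exists_lift_sub_le_of_forall_cut (p := 2 * π) φ fun S hS hSu => by
    obtain ⟨i, hi, j, hj, -, hij⟩ := hcut S hS hSu
    exact ⟨i, hi, j, hj, (hf i j).exists_abs_le_modEq_of_deriv_nonneg hij⟩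
  have hspread i j : ψ i - ψ j ≤ π :=
    (hψ i j).trans (by simpa using natCast_sub_one_mul_le pi_pos.le hbN)
  obtain ⟨i₁, j₁, hlt⟩ := exists_lt_of_not_inPhase hψφ hnip
  obtain ⟨i₀, -, hi₀⟩ := exists_max_image univ ψ ⟨i₁, mem_univ i₁⟩
  set S := univ.filter fun i => ∀ j, ψ j ≤ ψ i
  obtain ⟨i, hi, j, hj, hadj, hij⟩ := hcut S ⟨i₀, by simpa [S] using hi₀⟩
    fun h => hlt.not_ge ((mem_filter.1 (h ▸ mem_univ i₁) :).2 j₁)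
  have hle : ∀ k, ψ k ≤ ψ i := (mem_filter.1 hi).2
  have hj : ψ j ≠ ψ i := fun h => hj (mem_filter.2 ⟨mem_univ j, fun k => h ▸ hle k⟩)
  exact hij.not_gt ((hf i j).deriv_neg_of_modEq_pi hbπ <|
    sub_modEq_pi_of_forall_le (hf i) hψφ (heq i) hle (fun k => by linarith [hspread i k])
      hadj hj)

/-- Let each coupling function belong to the family `F_b` (odd, 2π-periodic,
C¹, `f' > 0` on `(-b, b)` and `f' < 0` on `(b, 2π - b)`), with `b ∈ (0, π)` and
`b ≤ π/(N-1)`, on a connected graph with `N` vertices. Then every non-in-phase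
equilibrium `φ*` admits a cut `C` with `f'_ij(φ*_j - φ*_i) < 0` on every crossing edge
(hence `φ*` is unstable). -/
theorem stmt6 {N : ℕ} (hN : 2 ≤ N)
    (G : SimpleGraph (Fin N)) [DecidableRel G.Adj] (hG : G.Connected)
    (b : ℝ) (hb0 : 0 < b) (hbπ : b < π)
    (f : Fin N → Fin N → ℝ → ℝ)
    (hsym : ∀ i j, f i j = f j i)
    (hodd : ∀ i j θ, f i j (-θ) = -(f i j θ))
    (hper : ∀ i j θ, f i j (θ + 2 * π) = f i j θ)
    (hC1 : ∀ i j, ContDiff ℝ 1 (f i j))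
    (hpos : ∀ i j θ, -b < θ → θ < b → 0 < deriv (f i j) θ)
    (hneg : ∀ i j θ, b < θ → θ < 2 * π - b → deriv (f i j) θ < 0)
    (hbN : b ≤ π / (N - 1))
    (φ : Fin N → ℝ)
    (heq : ∀ i, ∑ j ∈ G.neighborFinset i, f i j (φ j - φ i) = 0)
    (hnip : ¬ ∀ i j, ∃ m : ℤ, φ i - φ j = 2 * π * m) :  -- non-in-phase
    ∃ S : Finset (Fin N), S.Nonempty ∧ S ≠ univ ∧
      ∀ i ∈ S, ∀ j ∉ S, G.Adj i j → deriv (f i j) (φ j - φ i) < 0 :=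
  stmt6_general G b hbπ f hodd hper hC1 hpos hneg hbN φ heq hnip
end

section
/- Let f ∈ F_{π/2} (odd, 2π-periodic, C¹, f' > 0 on (−π/2, π/2), f' < 0 on (π/2, 3π/2)), with f even around π/2. Consider the all-to-all coupled system on a complete graph with an equilibrium φ* consisting of l_B constellations, each of m evenly spaced blocks with k_l oscillators per block of constellation l, and m even. Then for the partition P isolating one block V_0 of constellation C_0, Σ_{ij∈C(P)} f'(φ*_j − φ*_i) = −k_1 f'(0) < 0, hence φ* is unstable. -/
open Finset Real

/-!
Oddness together with the symmetry `f (π - θ) = f θ` makes `f`, hence `f'`, antiperiodic with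
antiperiod `π`. Since `m` is even, the `m` evenly spaced phases of a constellation come in pairs
differing by `π`, so `f'` sums to zero over every constellation, and over all oscillators.
Oscillators of `V₀` sit at phase `0`, so the cut sum of one of them is the total sum minus
its `k₀` terms `f'(0)` inside `V₀`, i.e. `-k₀ f'(0) < 0`.
-/

theorem Function.Antiperiodic.deriv {f : ℝ → ℝ} {c : ℝ} (h : Function.Antiperiodic f c) :
    Function.Antiperiodic (deriv f) c := fun x => by
  rw [← deriv_comp_add_const, show (fun y => f (y + c)) = fun y => -f y from funext h,
    deriv.fun_neg]

theorem antiperiodic_pi_of_odd_of_symm {f : ℝ → ℝ} (hodd : ∀ θ, f (-θ) = -f θ)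
    (hsymm : ∀ θ, f (π - θ) = f θ) : Function.Antiperiodic f π := fun x => by
  rw [← hodd, ← hsymm]
  congr 1
  ring

theorem sum_fin_antiperiodic_eq_zero {g : ℝ → ℝ} {c : ℝ} (hg : Function.Antiperiodic g c)
    {m : ℕ} (hm : Even m) (d : ℝ) : ∑ j : Fin m, g (2 * c * j / m + d) = 0 := by
  obtain ⟨n, rfl⟩ := hm
  rw [Fin.sum_univ_eq_sum_range (fun j => g (2 * c * j / ↑(n + n) + d)), sum_range_add,
    ← sum_add_distrib]
  refine sum_eq_zero fun x hx => ?_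
  have hn : (n : ℝ) ≠ 0 := Nat.cast_ne_zero.mpr (by rw [mem_range] at hx; omega)
  have hshift : 2 * c * ((n + x : ℕ) : ℝ) / ((n + n : ℕ) : ℝ) + d
      = 2 * c * (x : ℝ) / ((n + n : ℕ) : ℝ) + d + c := by
    push_cast; field_simp; ring
  rw [hshift, hg, add_neg_cancel]

theorem card_filter_sigma_block {L m : ℕ} (hm : 0 < m) (k : Fin L → ℕ) (l₀ : Fin L) :
    #(univ.filter fun x : (l : Fin L) × (Fin m × Fin (k l)) => x.1 = l₀ ∧ (x.2.1 : ℕ) = 0)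
      = k l₀ := by
  have hblock : (univ.filter fun x : (l : Fin L) × (Fin m × Fin (k l)) => x.1 = l₀ ∧ (x.2.1 : ℕ) = 0)
      = univ.map ⟨fun r : Fin (k l₀) => ⟨l₀, (⟨0, hm⟩, r)⟩, fun r s h => by simpa using h⟩ := by
    ext ⟨l, j, r⟩
    simp only [mem_filter, mem_univ, true_and, mem_map]
    constructor
    · rintro ⟨rfl, hj⟩
      obtain rfl : j = ⟨0, hm⟩ := Fin.ext hj
      exact ⟨r, rfl⟩
    · rintro ⟨r, h⟩
      cases h
      exact ⟨rfl, rfl⟩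
  rw [hblock, card_map, card_univ, Fintype.card_fin]

theorem sum_filter_not_mem_eq_sub {ι M : Type*} [Fintype ι] [DecidableEq ι] [AddCommGroup M]
    (s : Finset ι) (g : ι → M) :
    ∑ j ∈ univ.filter (fun j => j ∉ s), g j = ∑ j, g j - ∑ j ∈ s, g j := by
  rw [eq_sub_iff_add_eq, add_comm, ← sum_filter_add_sum_filter_not univ (· ∈ s), filter_univ_mem]

theorem sum_sigma_antiperiodic_eq_zero {g : ℝ → ℝ} {c : ℝ} (hg : Function.Antiperiodic g c)
    {L m : ℕ} (hm : Even m) (k : Fin L → ℕ) (δ : Fin L → ℝ) :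
    ∑ x : (l : Fin L) × (Fin m × Fin (k l)), g (2 * c * (x.2.1 : ℕ) / m + δ x.1) = 0 := by
  rw [← univ_sigma_univ, sum_sigma]
  refine sum_eq_zero fun l _ => ?_
  rw [Fintype.sum_prod_type, sum_comm]
  exact sum_eq_zero fun r _ => sum_fin_antiperiodic_eq_zero hg hm (δ l)

theorem stmt10_general (L m : ℕ) (hL : 0 < L) (hm : 0 < m) (hme : Even m)
    (k : Fin L → ℕ) (hk : ∀ l, 0 < k l) (δ : Fin L → ℝ)
    (hδ0 : δ ⟨0, hL⟩ = 0)
    (f : ℝ → ℝ)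
    (hodd : ∀ θ, f (-θ) = -f θ)
    (hpos : ∀ θ, -(π/2) < θ → θ < π/2 → 0 < deriv f θ)
    (heven : ∀ θ, f (π - θ) = f θ)
    -- the oscillators: constellation l, block j, oscillator r within the block
    (φ : ((l : Fin L) × (Fin m × Fin (k l))) → ℝ)
    (hφ : ∀ x, φ x = 2 * π * (x.2.1 : ℕ) / m + δ x.1)
    (V₀ : Finset ((l : Fin L) × (Fin m × Fin (k l))))
    (hV₀ : V₀ = univ.filter (fun x => x.1 = ⟨0, hL⟩ ∧ (x.2.1 : ℕ) = 0)) :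
    (∀ i ∈ V₀, ∑ j ∈ univ.filter (fun j => j ∉ V₀), deriv f (φ j - φ i)
        = -((k ⟨0, hL⟩ : ℝ)) * deriv f 0) ∧
    ∑ i ∈ V₀, ∑ j ∈ univ.filter (fun j => j ∉ V₀), deriv f (φ j - φ i) < 0 := by
  have hf' : Function.Antiperiodic (deriv f) π := (antiperiodic_pi_of_odd_of_symm hodd heven).deriv
  have hφV₀ : ∀ i ∈ V₀, φ i = 0 := by
    intro i hi
    rw [hV₀, mem_filter] at hi
    rw [hφ, hi.2.2, hi.2.1, hδ0]
    simp
  have hcard : #V₀ = k ⟨0, hL⟩ := hV₀ ▸ card_filter_sigma_block hm k _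
  have hcut : ∀ i ∈ V₀, ∑ j ∈ univ.filter (fun j => j ∉ V₀), deriv f (φ j - φ i)
      = -((k ⟨0, hL⟩ : ℝ)) * deriv f 0 := by
    intro i hi
    simp only [sum_filter_not_mem_eq_sub, hφV₀ i hi, sub_zero, hφ]
    rw [sum_sigma_antiperiodic_eq_zero hf' hme, sum_congr rfl fun j hj => by rw [← hφ, hφV₀ j hj],
      sum_const, hcard, nsmul_eq_mul, zero_sub, neg_mul]
  refine ⟨hcut, ?_⟩
  rw [sum_congr rfl hcut, sum_const, hcard, nsmul_eq_mul]
  have hf'0 : 0 < deriv f 0 := hpos 0 (by linarith [pi_pos]) (by linarith [pi_pos])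
  have hk₀ : (0 : ℝ) < k ⟨0, hL⟩ := Nat.cast_pos.mpr (hk _)
  linarith [mul_pos (mul_pos hk₀ hk₀) hf'0]

/-- Let `f ∈ F_{π/2}` (odd, 2π-periodic, C¹, `f' > 0` on `(-π/2, π/2)`,
`f' < 0` on `(π/2, 3π/2)`) be even around `π/2`. Consider an all-to-all coupled system
with an equilibrium `φ*` consisting of `L` constellations, each made of `m` evenly
spaced blocks (`m` even) with `k l` oscillators per block of constellation `l`
(constellation `l` is shifted by `δ l`). Then for the partition `P` isolating one
block `V₀` of constellation `C₀`, the cut cost is `-k₀ f'(0)` per oscillator of `V₀`,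
so the total cut cost `∑_{ij ∈ C(P)} f'(φ*_j - φ*_i)` is negative; hence `φ*` is
unstable. -/
theorem stmt10 (L m : ℕ) (hL : 0 < L) (hm : 0 < m) (hme : Even m)
    (k : Fin L → ℕ) (hk : ∀ l, 0 < k l) (δ : Fin L → ℝ)
    (hδ0 : δ ⟨0, hL⟩ = 0)
    (f : ℝ → ℝ)
    (hodd : ∀ θ, f (-θ) = -f θ)
    (hper : ∀ θ, f (θ + 2 * π) = f θ)
    (hC1 : ContDiff ℝ 1 f)
    (hpos : ∀ θ, -(π/2) < θ → θ < π/2 → 0 < deriv f θ)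
    (hneg : ∀ θ, π/2 < θ → θ < 3*π/2 → deriv f θ < 0)
    (heven : ∀ θ, f (π - θ) = f θ)
    -- the oscillators: constellation l, block j, oscillator r within the block
    (φ : ((l : Fin L) × (Fin m × Fin (k l))) → ℝ)
    (hφ : ∀ x, φ x = 2 * π * (x.2.1 : ℕ) / m + δ x.1)
    (V₀ : Finset ((l : Fin L) × (Fin m × Fin (k l))))
    (hV₀ : V₀ = univ.filter (fun x => x.1 = ⟨0, hL⟩ ∧ (x.2.1 : ℕ) = 0)) :
    (∀ i ∈ V₀, ∑ j ∈ univ.filter (fun j => j ∉ V₀), deriv f (φ j - φ i)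
        = -((k ⟨0, hL⟩ : ℝ)) * deriv f 0) ∧
    ∑ i ∈ V₀, ∑ j ∈ univ.filter (fun j => j ∉ V₀), deriv f (φ j - φ i) < 0 :=
  stmt10_general L m hL hm hme k hk δ hδ0 f hodd hpos heven φ hφ V₀ hV₀
end

section
/- Let f ∈ F_{π/2} be odd, even around π/2, strictly concave on [0,π], with f' strictly concave on [−π/2, π/2], and let m = 2k+1 ≥ 7 be odd. Then for every δ ∈ [0, 2π/m], 2g_m'(δ) − f'(δ + 2π/m) − 2f'(δ) − f'(δ − 2π/m) < f'(0) − 2f'(π/m) ≤ 0, where g_m'(δ) = Σ_{j=0}^{m−1} f'(2πj/m + δ). -/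
/-!
Write `h = f'` and `t = π / m`. Oddness of `f` and its symmetry about `π / 2` make `h` even and
`π`-antiperiodic, so folding the points `2πj/m + δ` with `j > k` back by `π` turns `g_m'(δ)` into
the alternating sum `h δ - ∑_{i<k} (h (δ + (2i+1)t) - h (δ + (2i+2)t))` over the grid `δ + jt`.
Strict concavity of `f` on `[0, π]` makes `h` decreasing there, so every pair inside `[0, π]`
contributes a nonnegative drop. Keeping only the first pair (and, when `δ > t`, the last one,
which wraps around past `π`) reduces the claim to `2 h t - 2 h (2t) < h 0` and `h 0 ≤ 2 h t`,
both chord estimates for the concave function `h` on `[0, π/2]`, which vanishes at `π/2`;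
the first one needs `t < π / 6`, i.e. `m ≥ 7`.
-/

open Finset Real

section DerivSymmetry

variable {f : ℝ → ℝ}

lemma deriv_neg_of_odd (hf : ∀ x, f (-x) = -f x) (x : ℝ) : deriv f (-x) = deriv f x := by
  have h := deriv_comp_neg (f := f) (x := x)
  simp only [hf, deriv.fun_neg] at h
  linarith

lemma deriv_const_sub_of_symm {a : ℝ} (hf : ∀ x, f (a - x) = f x) (x : ℝ) :
    deriv f (a - x) = -deriv f x := by
  have h := deriv_comp_const_sub (f := f) (a := a) (x := x)
  simp only [hf] at h
  linarith

end DerivSymmetry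

section ConcaveBounds

variable {h : ℝ → ℝ} {u t : ℝ}

lemma apply_zero_le_two_mul_of_concaveOn (hc : ConcaveOn ℝ (Set.Icc 0 u) h) (hu : h u = 0)
    (h0 : 0 ≤ h 0) (ht : 0 < t) (htu : 2 * t ≤ u) : h 0 ≤ 2 * h t := by
  have hchord := hc.neg.secant_mono_aux1 (y := t) (Set.left_mem_Icc.2 (by linarith))
    (Set.right_mem_Icc.2 (by linarith)) ht (by linarith)
  simp only [Pi.neg_apply, hu] at hchord
  nlinarith

lemma two_mul_sub_two_mul_lt_of_concaveOn (hc : ConcaveOn ℝ (Set.Icc 0 u) h) (hu : h u = 0)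
    (h0 : 0 < h 0) (hle : h t ≤ h 0) (ht : 0 < t) (htu : 3 * t < u) :
    2 * h t - 2 * h (2 * t) < h 0 := by
  have hchord := hc.neg.secant_mono_aux1 (x := t) (y := 2 * t) ⟨ht.le, by linarith⟩
    (Set.right_mem_Icc.2 (by linarith)) (by linarith) (by linarith)
  simp only [Pi.neg_apply, hu] at hchord
  have hpos : 0 < u - t := by linarith
  suffices (u - t) * (2 * h t - 2 * h (2 * t)) < (u - t) * h 0 from
    lt_of_mul_lt_mul_left this hpos.le
  nlinarith

end ConcaveBounds

def pairDrop (h : ℝ → ℝ) (δ t : ℝ) (i : ℕ) : ℝ :=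
  h (δ + (2 * i + 1) * t) - h (δ + (2 * i + 2) * t)

section PairDrop

variable {h : ℝ → ℝ} {δ t : ℝ}

lemma pairDrop_zero : pairDrop h δ t 0 = h (δ + t) - h (δ + 2 * t) := by
  simp [pairDrop]

lemma Function.Antiperiodic.sum_range_eq_sub_sum_pairDrop {k : ℕ}
    (hh : Function.Antiperiodic h ((2 * k + 1) * t)) (δ : ℝ) :
    ∑ j ∈ range (2 * k + 1), h (δ + 2 * j * t) = h δ - ∑ i ∈ range k, pairDrop h δ t i := by
  rw [show 2 * k + 1 = (k + 1) + k by ring, sum_range_add, sum_range_succ']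
  have hnear (i : ℕ) : h (δ + 2 * ((i + 1 : ℕ) : ℝ) * t) = h (δ + (2 * i + 2) * t) := by
    push_cast
    ring_nf
  have hfar (i : ℕ) : h (δ + 2 * ((k + 1 + i : ℕ) : ℝ) * t) = -h (δ + (2 * i + 1) * t) := by
    rw [← hh]
    push_cast
    ring_nf
  simp only [hnear, hfar, pairDrop, sum_sub_distrib, sum_neg_distrib, Nat.cast_zero, mul_zero,
    zero_mul, add_zero]
  ring

variable (hmono : AntitoneOn h (Set.Icc 0 π)) (hδ : 0 ≤ δ) (ht : 0 ≤ t)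
include hmono hδ ht

lemma pairDrop_nonneg {i : ℕ} (hi : δ + (2 * i + 2) * t ≤ π) : 0 ≤ pairDrop h δ t i :=
  sub_nonneg.2 <| hmono ⟨by positivity, by linarith⟩ ⟨by positivity, hi⟩ (by linarith)

lemma pairDrop_zero_le_sum {n : ℕ} (hn : 1 ≤ n) (hnt : δ + 2 * n * t ≤ π) :
    pairDrop h δ t 0 ≤ ∑ i ∈ range n, pairDrop h δ t i := by
  refine single_le_sum (f := pairDrop h δ t) (fun i hi => pairDrop_nonneg hmono hδ ht ?_)
    (mem_range.2 hn)
  have : (i : ℝ) + 1 ≤ n := by exact_mod_cast mem_range.1 hi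
  nlinarith

end PairDrop

section GridBounds

variable {h : ℝ → ℝ} {δ t : ℝ} {k : ℕ}
  (heven : ∀ x, h (-x) = h x) (hmono : AntitoneOn h (Set.Icc 0 π)) (ht : 0 ≤ t)
  (hkt : (2 * k + 1) * t = π) (hδ : 0 ≤ δ)
include heven hmono ht hkt hδ

lemma le_two_mul_sum_pairDrop_add_of_le (hk : 1 ≤ k) (hδt : δ ≤ t) :
    2 * h (2 * t) ≤ 2 * ∑ i ∈ range k, pairDrop h δ t i + h (δ + 2 * t) + h (δ - 2 * t) := by
  have h3t : 3 * t ≤ π := by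
    have : (1 : ℝ) ≤ k := by exact_mod_cast hk
    nlinarith
  have hsum := pairDrop_zero_le_sum hmono hδ ht hk (by linarith)
  have hrefl : h (δ - 2 * t) = h (2 * t - δ) := by rw [← heven, neg_sub]
  have h2 : h (δ + 2 * t) ≤ h (2 * t - δ) :=
    hmono ⟨by linarith, by linarith⟩ ⟨by linarith, by linarith⟩ (by linarith)
  have h1 : h (2 * t) ≤ h (δ + t) :=
    hmono ⟨by linarith, by linarith⟩ ⟨by linarith, by linarith⟩ (by linarith)
  rw [pairDrop_zero] at hsum
  linarith

lemma le_two_mul_sum_pairDrop_add_of_gt (hk : 2 ≤ k) (hanti : Function.Antiperiodic h π)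
    (htδ : t < δ) (hδt : δ ≤ 2 * t) :
    2 * h t + h (3 * t) - h 0 ≤
      2 * ∑ i ∈ range k, pairDrop h δ t i + h (δ + 2 * t) + h (δ - 2 * t) := by
  obtain ⟨n, rfl⟩ := Nat.exists_eq_add_of_le' hk
  have hnt : (2 * n + 5) * t = π := by push_cast at hkt; linarith
  have h5t : 5 * t ≤ π := by nlinarith [(n.cast_nonneg : (0 : ℝ) ≤ n)]
  have hlast : pairDrop h δ t (n + 1) = h (δ - t) - h (δ - 2 * t) := by
    rw [pairDrop, show δ + (2 * ((n + 1 : ℕ) : ℝ) + 1) * t = δ - 2 * t + π by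
      push_cast; linarith, show δ + (2 * ((n + 1 : ℕ) : ℝ) + 2) * t = δ - t + π by
      push_cast; linarith, hanti, hanti]
    ring
  have hsum := pairDrop_zero_le_sum (n := n + 1) hmono hδ ht (by omega) (by push_cast; linarith)
  rw [sum_range_succ, hlast]
  rw [pairDrop_zero] at hsum
  have hrefl : h (δ - 2 * t) = h (2 * t - δ) := by rw [← heven, neg_sub]
  have h1 : h (δ + 2 * t) ≤ h (δ + t) :=
    hmono ⟨by linarith, by linarith⟩ ⟨by linarith, by linarith⟩ (by linarith)
  have h2 : h (2 * t - δ) ≤ h 0 :=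
    hmono ⟨le_rfl, by linarith⟩ ⟨by linarith, by linarith⟩ (by linarith)
  have h3 : h t ≤ h (δ - t) :=
    hmono ⟨by linarith, by linarith⟩ ⟨by linarith, by linarith⟩ (by linarith)
  have h4 : h (3 * t) ≤ h (δ + t) :=
    hmono ⟨by linarith, by linarith⟩ ⟨by linarith, by linarith⟩ (by linarith)
  linarith

end GridBounds

lemma two_mul_sum_sub_lt_of_strictAntiOn {h : ℝ → ℝ} {δ t : ℝ} {k : ℕ}
    (heven : ∀ x, h (-x) = h x) (hanti : Function.Antiperiodic h π)
    (hmono : StrictAntiOn h (Set.Icc 0 π)) (hzero : h (π / 2) = 0)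
    (hconc : ConcaveOn ℝ (Set.Icc 0 (π / 2)) h) (ht : 0 < t) (hk : 3 ≤ k)
    (hkt : (2 * k + 1) * t = π) (hδ : δ ∈ Set.Icc 0 (2 * t)) :
    2 * ∑ j ∈ range (2 * k + 1), h (δ + 2 * j * t) - h (δ + 2 * t) - 2 * h δ - h (δ - 2 * t)
      < h 0 - 2 * h t ∧ h 0 - 2 * h t ≤ 0 := by
  have h7t : 7 * t ≤ π := by
    have : (3 : ℝ) ≤ k := by exact_mod_cast hk
    nlinarith
  have hpos {x : ℝ} (hx0 : 0 ≤ x) (hx : x < π / 2) : 0 < h x :=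
    hzero ▸ hmono ⟨hx0, by linarith⟩ ⟨by positivity, by linarith [pi_pos]⟩ hx
  have h0 : 0 < h 0 := hpos le_rfl (by positivity)
  refine ⟨?_, by linarith [apply_zero_le_two_mul_of_concaveOn hconc hzero h0.le ht (by linarith)]⟩
  have hanti' : Function.Antiperiodic h ((2 * k + 1) * t) := hkt ▸ hanti
  rw [hanti'.sum_range_eq_sub_sum_pairDrop]
  rcases le_or_gt δ t with hδt | htδ
  · have := le_two_mul_sum_pairDrop_add_of_le heven hmono.antitoneOn ht.le hkt hδ.1 (by omega) hδt
    have := two_mul_sub_two_mul_lt_of_concaveOn hconc hzero h0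
      (hmono.antitoneOn ⟨le_rfl, pi_pos.le⟩ ⟨ht.le, by linarith⟩ ht.le) ht (by linarith)
    linarith
  · have := le_two_mul_sum_pairDrop_add_of_gt heven hmono.antitoneOn ht.le hkt hδ.1 (by omega) hanti
      htδ hδ.2
    have := hpos (x := 3 * t) (by positivity) (by linarith)
    linarith

theorem stmt15_general (f : ℝ → ℝ)
    (hodd : ∀ θ, f (-θ) = -f θ)
    (hC1 : ContDiff ℝ 1 f)
    (heven : ∀ θ, f (π - θ) = f θ)
    (hconc : StrictConcaveOn ℝ (Set.Icc 0 π) f)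
    (hconc' : StrictConcaveOn ℝ (Set.Icc (-(π/2)) (π/2)) (deriv f))
    (m k : ℕ) (hmk : m = 2 * k + 1) (h7 : 7 ≤ m) :
    ∀ δ ∈ Set.Icc (0:ℝ) (2 * π / m),
      (2 * (∑ j ∈ Finset.range m, deriv f (2 * π * j / m + δ))
          - deriv f (δ + 2 * π / m) - 2 * deriv f δ - deriv f (δ - 2 * π / m)
        < deriv f 0 - 2 * deriv f (π / m)) ∧
      deriv f 0 - 2 * deriv f (π / m) ≤ 0 := by
  intro δ hδ
  have hsymm : ∀ x, deriv f (-x) = deriv f x := deriv_neg_of_odd hodd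
  have hanti : Function.Antiperiodic (deriv f) π := fun x => by
    rw [← hsymm x, ← deriv_const_sub_of_symm heven, sub_neg_eq_add, add_comm]
  have hzero : deriv f (π / 2) = 0 := by
    have := deriv_const_sub_of_symm heven (π / 2)
    rw [sub_half] at this
    linarith
  have hmono : StrictAntiOn (deriv f) (Set.Icc 0 π) :=
    hconc.strictAntiOn_deriv fun x _ => hC1.differentiable one_ne_zero x
  have hconc_half : ConcaveOn ℝ (Set.Icc 0 (π / 2)) (deriv f) :=
    hconc'.concaveOn.subset (Set.Icc_subset_Icc (by linarith [pi_pos]) le_rfl) (convex_Icc _ _)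
  have hm : (m : ℝ) = 2 * k + 1 := by exact_mod_cast hmk
  have ht : 0 < π / m := by positivity
  have hkt : (2 * k + 1) * (π / m) = π := by rw [← hm]; field_simp
  have htwo : 2 * π / m = 2 * (π / m) := mul_div_assoc _ _ _
  have hsum : ∑ j ∈ range m, deriv f (2 * π * j / m + δ)
      = ∑ j ∈ range (2 * k + 1), deriv f (δ + 2 * j * (π / m)) := by
    refine sum_congr (by rw [hmk]) fun j _ => ?_
    ring_nf
  rw [hsum, htwo]
  exact two_mul_sum_sub_lt_of_strictAntiOn hsymm hanti hmono hzero hconc_half ht (by omega) hkt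
    (htwo ▸ hδ)

/-- Let `f ∈ F_{π/2}` (odd, 2π-periodic, C¹, `f' > 0` on `(-π/2, π/2)`,
`f' < 0` on `(π/2, 3π/2)`) be even around `π/2`, strictly concave on `[0, π]`, with
`f'` strictly concave on `[-π/2, π/2]`, and let `m = 2k + 1 ≥ 7` be odd. Then for every
`δ ∈ [0, 2π/m]`,
`2 g_m'(δ) - f'(δ + 2π/m) - 2 f'(δ) - f'(δ - 2π/m) < f'(0) - 2 f'(π/m) ≤ 0`,
where `g_m'(δ) = ∑_{j=0}^{m-1} f'(2πj/m + δ)`. -/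
theorem stmt15 (f : ℝ → ℝ)
    (hodd : ∀ θ, f (-θ) = -f θ)
    (hper : ∀ θ, f (θ + 2 * π) = f θ)
    (hC1 : ContDiff ℝ 1 f)
    (hpos : ∀ θ, -(π/2) < θ → θ < π/2 → 0 < deriv f θ)
    (hneg : ∀ θ, π/2 < θ → θ < 3*π/2 → deriv f θ < 0)
    (heven : ∀ θ, f (π - θ) = f θ)
    (hconc : StrictConcaveOn ℝ (Set.Icc 0 π) f)
    (hconc' : StrictConcaveOn ℝ (Set.Icc (-(π/2)) (π/2)) (deriv f))
    (m k : ℕ) (hmk : m = 2 * k + 1) (h7 : 7 ≤ m) :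
    ∀ δ ∈ Set.Icc (0:ℝ) (2 * π / m),
      (2 * (∑ j ∈ Finset.range m, deriv f (2 * π * j / m + δ))
          - deriv f (δ + 2 * π / m) - 2 * deriv f δ - deriv f (δ - 2 * π / m)
        < deriv f 0 - 2 * deriv f (π / m)) ∧
      deriv f 0 - 2 * deriv f (π / m) ≤ 0 :=
  stmt15_general f hodd hC1 heven hconc hconc' m k hmk h7
end
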